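/- arXiv:2603.23312 — 2 statements merged into one kernel-verified Lean document; each statement's English description precedes it below -/
import Mathlib

section
/- Under the same local Lipschitz, local boundedness, and measurability assumptions on f, any two maximally defined solutions of ẋ(t) = f(t,(φ⋄_{t0}x)_t) from the same bounded initial history φ coincide: their maximal existence intervals are equal and they agree on it. -/
/-!
Where two solutions are both defined, say on `[t0, t1]`, their segments stay in a bounded set of
histories, on which `f` is Lipschitz. Subtracting the integral equations bounds the deviation
`‖x t - y t‖` by `∫ L · (past deviation)`, and iterating this bound against the majorants
`M (L (t - t0))^k / k!` forces the deviation to vanish. So the solutions agree on the common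
interval, and maximality of either one then rules out a strictly shorter interval for the other.
-/

open MeasureTheory Set Filter
open scoped ENNReal

/-- Segment at time `t` of the concatenation `φ ⋄_{t0} x`. -/
noncomputable def seg16 (n : ℕ) (t0 : ℝ) (φ x : ℝ → (Fin n → ℝ)) (t u : ℝ) : Fin n → ℝ :=
  if t + u < t0 then φ (t + u - t0) else x (t + u)

/-- `x` is a solution of `ẋ(t) = f(t,(φ⋄_{t0}x)_t)`, `x(t0)=φ(0)`, on `[t0, Tx)`
(`Tx = ⊤` means global existence): it is continuous there and satisfies the
integral equation. -/
def IsSolOn16 (n : ℕ) (f : ℝ → (ℝ → (Fin n → ℝ)) → (Fin n → ℝ)) (t0 : ℝ)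
    (φ x : ℝ → (Fin n → ℝ)) (Tx : ℝ≥0∞) : Prop :=
  ENNReal.ofReal t0 < Tx ∧
  ContinuousOn x {t : ℝ | t0 ≤ t ∧ ENNReal.ofReal t < Tx} ∧
  ∀ t, t0 ≤ t → ENNReal.ofReal t < Tx →
    x t = φ 0 + ∫ s in t0..t, f s (seg16 n t0 φ x s)

/-- A maximally defined solution: a solution that admits no strict extension. -/
def IsMaxSolOn16 (n : ℕ) (f : ℝ → (ℝ → (Fin n → ℝ)) → (Fin n → ℝ)) (t0 : ℝ)
    (φ x : ℝ → (Fin n → ℝ)) (Tx : ℝ≥0∞) : Prop :=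
  IsSolOn16 n f t0 φ x Tx ∧
  ∀ y : ℝ → (Fin n → ℝ), ∀ Ty : ℝ≥0∞, IsSolOn16 n f t0 φ y Ty →
    (∀ t, t0 ≤ t → ENNReal.ofReal t < Tx → y t = x t) → Ty ≤ Tx

theorem integral_mul_pow_div_factorial (a t L M : ℝ) (k : ℕ) :
    ∫ s in a..t, L * (M * (L * (s - a)) ^ k / k.factorial) =
      M * (L * (t - a)) ^ (k + 1) / (k + 1).factorial := by
  have hfun : (fun s => L * (M * (L * (s - a)) ^ k / k.factorial)) =
      fun s => L ^ (k + 1) * M / k.factorial * (s - a) ^ k := by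
    funext s
    rw [mul_pow]
    ring
  rw [hfun, intervalIntegral.integral_const_mul,
    intervalIntegral.integral_comp_sub_right (· ^ k), integral_pow, Nat.factorial_succ, mul_pow]
  push_cast
  field_simp
  ring

/-- Gronwall's lemma for delay equations: the integrand at time `s` is controlled by the past
values of `Δ`, hence the hypothesis quantifies over monotone majorants of `Δ`. -/
theorem nonpos_of_le_integral_majorant {Δ : ℝ → ℝ} {a b L M : ℝ} (hL : 0 ≤ L) (hM : 0 ≤ M)
    (hΔM : ∀ t ∈ Icc a b, Δ t ≤ M)
    (hΔ : ∀ h : ℝ → ℝ, Continuous h → MonotoneOn h (Icc a b) → (∀ t ∈ Icc a b, Δ t ≤ h t) →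
      ∀ t ∈ Icc a b, Δ t ≤ ∫ s in a..t, L * h s) :
    ∀ t ∈ Icc a b, Δ t ≤ 0 := by
  have hiter : ∀ k : ℕ, ∀ t ∈ Icc a b, Δ t ≤ M * (L * (t - a)) ^ k / k.factorial := by
    intro k
    induction k with
    | zero => simpa using hΔM
    | succ k ih =>
      have hmono : MonotoneOn (fun s => M * (L * (s - a)) ^ k / k.factorial) (Icc a b) := by
        intro s hs s' _ hss'
        have : 0 ≤ L * (s - a) := mul_nonneg hL (sub_nonneg.2 hs.1)
        dsimp only
        gcongr
      intro t ht
      simpa only [integral_mul_pow_div_factorial] using hΔ _ (by fun_prop) hmono ih t ht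
  intro t ht
  have hlim : Tendsto (fun k : ℕ => M * (L * (t - a)) ^ k / k.factorial) atTop (nhds 0) := by
    simpa [mul_div_assoc] using
      (FloorSemiring.tendsto_pow_div_factorial_atTop (L * (t - a))).const_mul M
  exact ge_of_tendsto' hlim fun k => hiter k t ht

section HistoryLipschitz

variable {E : Type*} [NormedAddCommGroup E]

def HistoryLipschitzWith (θ R L : ℝ) (F : (ℝ → E) → E) : Prop :=
  ∀ ψ1 ψ2 : ℝ → E, (∀ u ∈ Icc (-θ) 0, ‖ψ1 u‖ ≤ R) → (∀ u ∈ Icc (-θ) 0, ‖ψ2 u‖ ≤ R) →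
    ‖F ψ1 - F ψ2‖ ≤ L * sSup ((fun u => ‖ψ1 u - ψ2 u‖) '' Icc (-θ) 0)

variable {θ R L M : ℝ} {F : (ℝ → E) → E} {ψ1 ψ2 : ℝ → E}

theorem HistoryLipschitzWith.norm_sub_le (hF : HistoryLipschitzWith θ R L F) (hL : 0 ≤ L)
    (hM : 0 ≤ M) (h1 : ∀ u ∈ Icc (-θ) 0, ‖ψ1 u‖ ≤ R) (h2 : ∀ u ∈ Icc (-θ) 0, ‖ψ2 u‖ ≤ R)
    (h12 : ∀ u ∈ Icc (-θ) 0, ‖ψ1 u - ψ2 u‖ ≤ M) :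
    ‖F ψ1 - F ψ2‖ ≤ L * M :=
  (hF ψ1 ψ2 h1 h2).trans <| mul_le_mul_of_nonneg_left
    (Real.sSup_le (forall_mem_image.2 h12) hM) hL

theorem HistoryLipschitzWith.norm_le (hF : HistoryLipschitzWith θ R L F) (hL : 0 ≤ L)
    (hR : 0 ≤ R) (h1 : ∀ u ∈ Icc (-θ) 0, ‖ψ1 u‖ ≤ R) :
    ‖F ψ1‖ ≤ ‖F 0‖ + L * R := by
  have h0 : ∀ u ∈ Icc (-θ) 0, ‖(0 : ℝ → E) u‖ ≤ R := fun _ _ => by simpa using hR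
  calc ‖F ψ1‖ ≤ ‖F 0‖ + ‖F ψ1 - F 0‖ := norm_le_insert' _ _
    _ ≤ ‖F 0‖ + L * R := by
      gcongr
      exact hF.norm_sub_le hL hR h1 h0 fun u hu => by simpa using h1 u hu

theorem integrable_of_historyLipschitzWith {μ : Measure ℝ} [IsFiniteMeasure μ]
    {f : ℝ → (ℝ → E) → E} {Ψ : ℝ → ℝ → E} {C : ℝ}
    (hmeas : AEStronglyMeasurable (fun t => f t (Ψ t)) μ)
    (hLip : ∀ᵐ t ∂μ, HistoryLipschitzWith θ R L (f t)) (hL : 0 ≤ L) (hR : 0 ≤ R)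
    (hf0 : ∀ᵐ t ∂μ, ‖f t 0‖ ≤ C) (hΨ : ∀ᵐ t ∂μ, ∀ u ∈ Icc (-θ) 0, ‖Ψ t u‖ ≤ R) :
    Integrable (fun t => f t (Ψ t)) μ := by
  refine (integrable_const (C + L * R)).mono' hmeas ?_
  filter_upwards [hLip, hf0, hΨ] with t hLt hf0t hΨt
  exact (hLt.norm_le hL hR hΨt).trans (by gcongr)

end HistoryLipschitz

section Solutions

variable {n : ℕ} {θ R L C : ℝ} {f : ℝ → (ℝ → (Fin n → ℝ)) → (Fin n → ℝ)} {t0 t1 s u : ℝ}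
  {φ x y : ℝ → Fin n → ℝ} {Tx Ty : ℝ≥0∞}

theorem norm_seg16_le (hφ : ∀ v, ‖φ v‖ ≤ R) (hx : ∀ r ∈ Icc t0 t1, ‖x r‖ ≤ R) (hs : s ≤ t1)
    (hu : u ≤ 0) : ‖seg16 n t0 φ x s u‖ ≤ R := by
  unfold seg16
  split_ifs with h
  · exact hφ _
  · exact hx _ ⟨not_lt.1 h, by linarith⟩

theorem norm_seg16_sub_seg16_le {M : ℝ} (hM : 0 ≤ M) (hxy : ∀ r ∈ Icc t0 s, ‖x r - y r‖ ≤ M)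
    (hu : u ≤ 0) : ‖seg16 n t0 φ x s u - seg16 n t0 φ y s u‖ ≤ M := by
  unfold seg16
  split_ifs with h
  · simpa using hM
  · exact hxy _ ⟨not_lt.1 h, by linarith⟩

theorem IsSolOn16.apply_start (hx : IsSolOn16 n f t0 φ x Tx) : x t0 = φ 0 := by
  simpa using hx.2.2 t0 le_rfl hx.1

theorem IsSolOn16.continuousOn_Icc (hx : IsSolOn16 n f t0 φ x Tx)
    (hT : ENNReal.ofReal t1 < Tx) : ContinuousOn x (Icc t0 t1) :=
  hx.2.1.mono fun _ hr => ⟨hr.1, (ENNReal.ofReal_le_ofReal hr.2).trans_lt hT⟩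

theorem IsSolOn16.eq_integral_of_mem_Icc (hx : IsSolOn16 n f t0 φ x Tx)
    (hT : ENNReal.ofReal t1 < Tx) {t : ℝ} (ht : t ∈ Icc t0 t1) :
    x t = φ 0 + ∫ s in t0..t, f s (seg16 n t0 φ x s) :=
  hx.2.2 t ht.1 ((ENNReal.ofReal_le_ofReal ht.2).trans_lt hT)

theorem eqOn_Icc_of_historyLipschitzWith (hL : 0 ≤ L)
    (hLip : ∀ᵐ s ∂volume.restrict (Icc t0 t1), HistoryLipschitzWith θ R L (f s))
    (hsegx : ∀ s ∈ Icc t0 t1, ∀ u ∈ Icc (-θ) 0, ‖seg16 n t0 φ x s u‖ ≤ R)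
    (hsegy : ∀ s ∈ Icc t0 t1, ∀ u ∈ Icc (-θ) 0, ‖seg16 n t0 φ y s u‖ ≤ R)
    (hFx : IntegrableOn (fun s => f s (seg16 n t0 φ x s)) (Icc t0 t1))
    (hFy : IntegrableOn (fun s => f s (seg16 n t0 φ y s)) (Icc t0 t1))
    (hxc : ContinuousOn x (Icc t0 t1)) (hyc : ContinuousOn y (Icc t0 t1))
    (hxeq : ∀ t ∈ Icc t0 t1, x t = φ 0 + ∫ s in t0..t, f s (seg16 n t0 φ x s))
    (hyeq : ∀ t ∈ Icc t0 t1, y t = φ 0 + ∫ s in t0..t, f s (seg16 n t0 φ y s)) :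
    EqOn x y (Icc t0 t1) := by
  obtain ⟨M, hM⟩ := isCompact_Icc.exists_bound_of_continuousOn (hxc.sub hyc)
  suffices h : ∀ t ∈ Icc t0 t1, ‖x t - y t‖ ≤ 0 from
    fun t ht => sub_eq_zero.1 (norm_le_zero_iff.1 (h t ht))
  refine nonpos_of_le_integral_majorant hL (le_max_right M 0)
    (fun t ht => (hM t ht).trans (le_max_left M 0)) ?_
  intro h hc hmono hΔh t ht
  have hsub : Icc t0 t ⊆ Icc t0 t1 := Icc_subset_Icc le_rfl ht.2
  have hii : ∀ {F : ℝ → Fin n → ℝ}, IntegrableOn F (Icc t0 t1) → IntervalIntegrable F volume t0 t :=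
    fun hF => (intervalIntegrable_iff_integrableOn_Icc_of_le ht.1).2 (hF.mono_set hsub)
  have hdiff : x t - y t =
      ∫ s in t0..t, (f s (seg16 n t0 φ x s) - f s (seg16 n t0 φ y s)) := by
    rw [intervalIntegral.integral_sub (hii hFx) (hii hFy), hxeq t ht, hyeq t ht]
    abel
  have hbound : ∀ᵐ s ∂volume.restrict (Icc t0 t),
      ‖f s (seg16 n t0 φ x s) - f s (seg16 n t0 φ y s)‖ ≤ L * h s := by
    filter_upwards [ae_restrict_of_ae_restrict_of_subset hsub hLip,
      ae_restrict_mem measurableSet_Icc] with s hLs hs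
    have hs1 := hsub hs
    have hpast : ∀ r ∈ Icc t0 s, ‖x r - y r‖ ≤ h s := fun r hr =>
      (hΔh r ⟨hr.1, hr.2.trans hs1.2⟩).trans (hmono ⟨hr.1, hr.2.trans hs1.2⟩ hs1 hr.2)
    exact hLs.norm_sub_le hL ((norm_nonneg _).trans (hΔh s hs1)) (hsegx s hs1) (hsegy s hs1)
      fun u hu => norm_seg16_sub_seg16_le ((norm_nonneg _).trans (hΔh s hs1)) hpast hu.2
  calc ‖x t - y t‖
      = ‖∫ s in t0..t, (f s (seg16 n t0 φ x s) - f s (seg16 n t0 φ y s))‖ := by rw [hdiff]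
    _ ≤ ∫ s in t0..t, ‖f s (seg16 n t0 φ x s) - f s (seg16 n t0 φ y s)‖ :=
      intervalIntegral.norm_integral_le_integral_norm ht.1
    _ ≤ ∫ s in t0..t, L * h s :=
      intervalIntegral.integral_mono_ae_restrict ht.1 ((hii hFx).sub (hii hFy)).norm
        ((hc.const_mul L).intervalIntegrable _ _) hbound

theorem IsSolOn16.eqOn_Icc
    (hLip : ∀ R > (0 : ℝ), ∀ T > (0 : ℝ), ∃ L ≥ (0 : ℝ),
      ∀ᵐ t ∂(volume.restrict (Icc 0 T)), HistoryLipschitzWith θ R L (f t))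
    (hf0 : ∀ T > (0 : ℝ), ∃ C : ℝ, ∀ᵐ t ∂(volume.restrict (Icc 0 T)), ‖f t 0‖ ≤ C)
    (hfmeas : ∀ x : ℝ → (Fin n → ℝ), ContinuousOn x (Icc t0 t1) →
      AEMeasurable (fun t => f t (seg16 n t0 φ x t)) (volume.restrict (Icc t0 t1)))
    (ht0 : 0 ≤ t0) (hφ : ∀ u, ‖φ u‖ ≤ C)
    (hx : IsSolOn16 n f t0 φ x Tx) (hy : IsSolOn16 n f t0 φ y Ty) (ht01 : t0 < t1)
    (hTx : ENNReal.ofReal t1 < Tx) (hTy : ENNReal.ofReal t1 < Ty) :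
    EqOn x y (Icc t0 t1) := by
  have hxc := hx.continuousOn_Icc hTx
  have hyc := hy.continuousOn_Icc hTy
  obtain ⟨Rx, hRx⟩ := isCompact_Icc.exists_bound_of_continuousOn hxc
  obtain ⟨Ry, hRy⟩ := isCompact_Icc.exists_bound_of_continuousOn hyc
  set R := max 1 (max C (max Rx Ry))
  have hR : 0 < R := lt_max_of_lt_left one_pos
  have hseg : ∀ {z : ℝ → Fin n → ℝ} {Rz : ℝ}, Rz ≤ max Rx Ry → (∀ r ∈ Icc t0 t1, ‖z r‖ ≤ Rz) →
      ∀ s ∈ Icc t0 t1, ∀ u ∈ Icc (-θ) 0, ‖seg16 n t0 φ z s u‖ ≤ R := fun hRz hz s hs u hu =>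
    norm_seg16_le (fun v => (hφ v).trans (by simp [R]))
      (fun r hr => (hz r hr).trans (hRz.trans (by simp [R]))) hs.2 hu.2
  have hsegx := hseg (le_max_left Rx Ry) hRx
  have hsegy := hseg (le_max_right Rx Ry) hRy
  have hsub : Icc t0 t1 ⊆ Icc 0 t1 := Icc_subset_Icc ht0 le_rfl
  have ht1 : 0 < t1 := ht0.trans_lt ht01
  obtain ⟨L, hL, hLip⟩ := hLip R hR t1 ht1
  replace hLip := ae_restrict_of_ae_restrict_of_subset hsub hLip
  obtain ⟨C0, hC0⟩ := hf0 t1 ht1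
  replace hC0 := ae_restrict_of_ae_restrict_of_subset hsub hC0
  have hF : ∀ {z : ℝ → Fin n → ℝ}, ContinuousOn z (Icc t0 t1) →
      (∀ s ∈ Icc t0 t1, ∀ u ∈ Icc (-θ) 0, ‖seg16 n t0 φ z s u‖ ≤ R) →
      IntegrableOn (fun s => f s (seg16 n t0 φ z s)) (Icc t0 t1) := fun hzc hseg =>
    integrable_of_historyLipschitzWith (hfmeas _ hzc).aestronglyMeasurable hLip hL hR.le hC0
      (ae_restrict_of_forall_mem measurableSet_Icc hseg)
  exact eqOn_Icc_of_historyLipschitzWith hL hLip hsegx hsegy (hF hxc hsegx) (hF hyc hsegy)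
    hxc hyc (fun _ => hx.eq_integral_of_mem_Icc hTx) (fun _ => hy.eq_integral_of_mem_Icc hTy)

end Solutions

theorem stmt_16_general (n : ℕ) (θ : ℝ)
    (f : ℝ → (ℝ → (Fin n → ℝ)) → (Fin n → ℝ))
    (hLip : ∀ R > (0 : ℝ), ∀ T > (0 : ℝ), ∃ L ≥ (0 : ℝ),
      ∀ᵐ t ∂(volume.restrict (Set.Icc 0 T)), ∀ ψ1 ψ2 : ℝ → (Fin n → ℝ),
        (∀ u ∈ Set.Icc (-θ) 0, ‖ψ1 u‖ ≤ R) → (∀ u ∈ Set.Icc (-θ) 0, ‖ψ2 u‖ ≤ R) →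
        ‖f t ψ1 - f t ψ2‖ ≤ L * sSup ((fun u => ‖ψ1 u - ψ2 u‖) '' Set.Icc (-θ) 0))
    (hf0 : ∀ T > (0 : ℝ), ∃ C : ℝ, ∀ᵐ t ∂(volume.restrict (Set.Icc 0 T)), ‖f t 0‖ ≤ C)
    (hfmeas : ∀ t0 ≥ (0 : ℝ), ∀ T > t0, ∀ φ : ℝ → (Fin n → ℝ), Measurable φ →
      (∃ C : ℝ, ∀ u, ‖φ u‖ ≤ C) → ∀ x : ℝ → (Fin n → ℝ), ContinuousOn x (Set.Icc t0 T) →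
      AEMeasurable (fun t => f t (seg16 n t0 φ x t)) (volume.restrict (Set.Icc t0 T)))
    (t0 : ℝ) (ht0 : 0 ≤ t0) (φ : ℝ → (Fin n → ℝ)) (hφm : Measurable φ)
    (hφb : ∃ C : ℝ, ∀ u, ‖φ u‖ ≤ C)
    (x y : ℝ → (Fin n → ℝ)) (Tx Ty : ℝ≥0∞)
    (hx : IsMaxSolOn16 n f t0 φ x Tx) (hy : IsMaxSolOn16 n f t0 φ y Ty) :
    Tx = Ty ∧ ∀ t, t0 ≤ t → ENNReal.ofReal t < Tx → x t = y t := by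
  obtain ⟨C, hC⟩ := hφb
  have agree : ∀ t, t0 ≤ t → ENNReal.ofReal t < Tx → ENNReal.ofReal t < Ty → x t = y t := by
    intro t ht hTx hTy
    rcases ht.eq_or_lt with rfl | ht
    · rw [hx.1.apply_start, hy.1.apply_start]
    · exact hx.1.eqOn_Icc hLip hf0 (hfmeas t0 ht0 t ht φ hφm ⟨C, hC⟩) ht0 hC hy.1 ht hTx hTy
        ⟨ht.le, le_rfl⟩
  have hT : Tx = Ty := by
    rcases le_total Tx Ty with h | h
    · exact le_antisymm h (hx.2 y Ty hy.1 fun t ht hTx => (agree t ht hTx (hTx.trans_le h)).symm)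
    · exact le_antisymm (hy.2 x Tx hx.1 fun t ht hTy => agree t ht (hTy.trans_le h) hTy) h
  exact ⟨hT, fun t ht hTx => agree t ht hTx (hT ▸ hTx)⟩

/-- Uniqueness of maximally defined solutions: two maximal solutions from the same
bounded initial history have the same existence interval and coincide on it. -/
theorem stmt_16 (n : ℕ) (θ : ℝ) (hθ : 0 < θ)
    (f : ℝ → (ℝ → (Fin n → ℝ)) → (Fin n → ℝ))
    (hLip : ∀ R > (0 : ℝ), ∀ T > (0 : ℝ), ∃ L ≥ (0 : ℝ),
      ∀ᵐ t ∂(volume.restrict (Set.Icc 0 T)), ∀ ψ1 ψ2 : ℝ → (Fin n → ℝ),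
        (∀ u ∈ Set.Icc (-θ) 0, ‖ψ1 u‖ ≤ R) → (∀ u ∈ Set.Icc (-θ) 0, ‖ψ2 u‖ ≤ R) →
        ‖f t ψ1 - f t ψ2‖ ≤ L * sSup ((fun u => ‖ψ1 u - ψ2 u‖) '' Set.Icc (-θ) 0))
    (hf0 : ∀ T > (0 : ℝ), ∃ C : ℝ, ∀ᵐ t ∂(volume.restrict (Set.Icc 0 T)), ‖f t 0‖ ≤ C)
    (hfmeas : ∀ t0 ≥ (0 : ℝ), ∀ T > t0, ∀ φ : ℝ → (Fin n → ℝ), Measurable φ →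
      (∃ C : ℝ, ∀ u, ‖φ u‖ ≤ C) → ∀ x : ℝ → (Fin n → ℝ), ContinuousOn x (Set.Icc t0 T) →
      AEMeasurable (fun t => f t (seg16 n t0 φ x t)) (volume.restrict (Set.Icc t0 T)))
    (t0 : ℝ) (ht0 : 0 ≤ t0) (φ : ℝ → (Fin n → ℝ)) (hφm : Measurable φ)
    (hφb : ∃ C : ℝ, ∀ u, ‖φ u‖ ≤ C)
    (x y : ℝ → (Fin n → ℝ)) (Tx Ty : ℝ≥0∞)
    (hx : IsMaxSolOn16 n f t0 φ x Tx) (hy : IsMaxSolOn16 n f t0 φ y Ty) :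
    Tx = Ty ∧ ∀ t, t0 ≤ t → ENNReal.ofReal t < Tx → x t = y t :=
  stmt_16_general n θ f hLip hf0 hfmeas t0 ht0 φ hφm hφb x y Tx Ty hx hy
end

section
/- Under the same assumptions on f, if x : [t0, T_x) → ℝⁿ is a maximally defined solution with sup_{t0 ≤ t < T_x} |x(t)| < ∞, then T_x = ∞; i.e., bounded maximal solutions exist globally. -/
open MeasureTheory Set Filter
open scoped ENNReal

/-- Segment at time `t` of the concatenation `φ ⋄_{t0} x`. -/
noncomputable def seg17 (n : ℕ) (t0 : ℝ) (φ x : ℝ → (Fin n → ℝ)) (t u : ℝ) : Fin n → ℝ :=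
  if t + u < t0 then φ (t + u - t0) else x (t + u)

/-- `x` is a solution of `ẋ(t) = f(t,(φ⋄_{t0}x)_t)`, `x(t0)=φ(0)`, on `[t0, Tx)`. -/
def IsSolOn17 (n : ℕ) (f : ℝ → (ℝ → (Fin n → ℝ)) → (Fin n → ℝ)) (t0 : ℝ)
    (φ x : ℝ → (Fin n → ℝ)) (Tx : ℝ≥0∞) : Prop :=
  ENNReal.ofReal t0 < Tx ∧
  ContinuousOn x {t : ℝ | t0 ≤ t ∧ ENNReal.ofReal t < Tx} ∧
  ∀ t, t0 ≤ t → ENNReal.ofReal t < Tx →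
    x t = φ 0 + ∫ s in t0..t, f s (seg17 n t0 φ x s)

/-- A maximally defined solution: a solution admitting no strict extension. -/
def IsMaxSolOn17 (n : ℕ) (f : ℝ → (ℝ → (Fin n → ℝ)) → (Fin n → ℝ)) (t0 : ℝ)
    (φ x : ℝ → (Fin n → ℝ)) (Tx : ℝ≥0∞) : Prop :=
  IsSolOn17 n f t0 φ x Tx ∧
  ∀ y : ℝ → (Fin n → ℝ), ∀ Ty : ℝ≥0∞, IsSolOn17 n f t0 φ y Ty →
    (∀ t, t0 ≤ t → ENNReal.ofReal t < Tx → y t = x t) → Ty ≤ Tx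

/-!
Let `L` and `C` bound, a.e. on a time interval reaching past `T`, the Lipschitz constant of `f s`
on histories bounded by `R` and the norm of `f s 0`. If `x` and `φ` are bounded by `R`, the
integrand `f s (φ ⋄ x)_s` is bounded a.e. by `C + L R`, so a bounded solution on `[t0, T)` is
Lipschitz and extends continuously to `[t0, T]`, where the extension still solves the integral
equation. For small `ε`, the Picard map `w ↦ φ 0 + ∫_{t0}^t f s (φ ⋄ w)_s ds` is a contraction on
the continuous functions on `[t0, T + ε]` that agree with this extension on `[t0, T]` and are
bounded by `R`; its fixed point is a solution on `[t0, T + ε)` extending `x`, which contradicts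
maximality when `T < ∞`.
-/

def LipschitzOnHistories {E F : Type*} [NormedAddCommGroup E] [NormedAddCommGroup F]
    (θ R L : ℝ) (G : (ℝ → E) → F) : Prop :=
  ∀ ψ1 ψ2 : ℝ → E, (∀ u ∈ Icc (-θ) 0, ‖ψ1 u‖ ≤ R) → (∀ u ∈ Icc (-θ) 0, ‖ψ2 u‖ ≤ R) →
    ‖G ψ1 - G ψ2‖ ≤ L * sSup ((fun u => ‖ψ1 u - ψ2 u‖) '' Icc (-θ) 0)

namespace LipschitzOnHistories

variable {E F : Type*} [NormedAddCommGroup E] [NormedAddCommGroup F] {θ R L δ : ℝ}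
  {G : (ℝ → E) → F} {ψ ψ1 ψ2 : ℝ → E}

theorem norm_sub_le (hG : LipschitzOnHistories θ R L G) (hL : 0 ≤ L) (hδ : 0 ≤ δ)
    (hψ1 : ∀ u ∈ Icc (-θ) 0, ‖ψ1 u‖ ≤ R) (hψ2 : ∀ u ∈ Icc (-θ) 0, ‖ψ2 u‖ ≤ R)
    (h : ∀ u ∈ Icc (-θ) 0, ‖ψ1 u - ψ2 u‖ ≤ δ) : ‖G ψ1 - G ψ2‖ ≤ L * δ := by
  refine (hG ψ1 ψ2 hψ1 hψ2).trans (mul_le_mul_of_nonneg_left (Real.sSup_le ?_ hδ) hL)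
  rintro _ ⟨u, hu, rfl⟩
  exact h u hu

theorem norm_le (hG : LipschitzOnHistories θ R L G) (hL : 0 ≤ L) (hR : 0 ≤ R)
    (hψ : ∀ u ∈ Icc (-θ) 0, ‖ψ u‖ ≤ R) : ‖G ψ‖ ≤ ‖G 0‖ + L * R := by
  have h := hG.norm_sub_le (ψ2 := 0) hL hR hψ (fun _ _ => by simpa using hR)
    (fun u hu => by simpa using hψ u hu)
  linarith [norm_sub_norm_le (G ψ) (G 0)]

end LipschitzOnHistories

theorem isClosed_setOf_eqOn_IccExtend {α E : Type*} [LinearOrder α] [TopologicalSpace α]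
    [TopologicalSpace E] [T2Space E] {a b : α} (hab : a ≤ b) (g : α → E) (s : Set α) :
    IsClosed {z : C(Icc a b, E) | EqOn (IccExtend hab z) g s} := by
  have hS : {z : C(Icc a b, E) | EqOn (IccExtend hab z) g s} =
      ⋂ t ∈ s, {z | z (projIcc a b hab t) = g t} := by
    ext z
    simp only [EqOn, mem_iInter]
    rfl
  rw [hS]
  exact isClosed_biInter fun t _ => isClosed_eq (continuous_eval_const _) continuous_const

section Segment

variable {n : ℕ} {t0 s u R δ : ℝ} {φ w w1 w2 : ℝ → (Fin n → ℝ)}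

theorem norm_seg17_le (hφ : ∀ v, ‖φ v‖ ≤ R) (hw : ∀ r ∈ Icc t0 s, ‖w r‖ ≤ R) (hu : u ≤ 0) :
    ‖seg17 n t0 φ w s u‖ ≤ R := by
  unfold seg17
  split_ifs with h
  · exact hφ _
  · exact hw _ ⟨not_lt.1 h, by linarith⟩

theorem norm_seg17_sub_le (hδ : 0 ≤ δ) (hw : ∀ r ∈ Icc t0 s, ‖w1 r - w2 r‖ ≤ δ) (hu : u ≤ 0) :
    ‖seg17 n t0 φ w1 s u - seg17 n t0 φ w2 s u‖ ≤ δ := by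
  unfold seg17
  split_ifs with h
  · simpa using hδ
  · exact hw _ ⟨not_lt.1 h, by linarith⟩

end Segment

noncomputable def picard {n : ℕ} (f : ℝ → (ℝ → (Fin n → ℝ)) → (Fin n → ℝ)) (t0 : ℝ)
    (φ w : ℝ → (Fin n → ℝ)) (t : ℝ) : Fin n → ℝ :=
  φ 0 + ∫ s in t0..t, f s (seg17 n t0 φ w s)

theorem isSolOn17_ofReal_iff {n : ℕ} {f : ℝ → (ℝ → (Fin n → ℝ)) → (Fin n → ℝ)}
    {φ x : ℝ → (Fin n → ℝ)} {t0 T : ℝ} (hT : 0 < T) :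
    IsSolOn17 n f t0 φ x (ENNReal.ofReal T) ↔
      t0 < T ∧ ContinuousOn x (Ico t0 T) ∧ EqOn x (picard f t0 φ x) (Ico t0 T) := by
  simp only [IsSolOn17, ENNReal.ofReal_lt_ofReal_iff hT, EqOn, mem_Ico, and_imp, picard]
  rfl

structure DelayBounds {n : ℕ} (f : ℝ → (ℝ → (Fin n → ℝ)) → (Fin n → ℝ))
    (φ : ℝ → (Fin n → ℝ)) (θ t0 Tb R L C : ℝ) : Prop where
  const_nonneg : 0 ≤ L
  norm_initial_le : ∀ v, ‖φ v‖ ≤ R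
  ae_lipschitz_bounded : ∀ᵐ s, s ∈ Icc t0 Tb → LipschitzOnHistories θ R L (f s) ∧ ‖f s 0‖ ≤ C

def IntegrandAEMeasurable {n : ℕ} (f : ℝ → (ℝ → (Fin n → ℝ)) → (Fin n → ℝ)) (φ : ℝ → (Fin n → ℝ))
    (t0 : ℝ) : Prop :=
  ∀ b > t0, ∀ w : ℝ → (Fin n → ℝ), ContinuousOn w (Icc t0 b) →
    AEMeasurable (fun s => f s (seg17 n t0 φ w s)) (volume.restrict (Icc t0 b))

theorem picard_sub_picard {n : ℕ} {f : ℝ → (ℝ → (Fin n → ℝ)) → (Fin n → ℝ)}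
    {φ w : ℝ → (Fin n → ℝ)} {t0 a b : ℝ}
    (hint : IntegrableOn (fun s => f s (seg17 n t0 φ w s)) (Icc t0 b)) (hta : t0 ≤ a)
    (hab : a ≤ b) :
    picard f t0 φ w b - picard f t0 φ w a = ∫ s in a..b, f s (seg17 n t0 φ w s) := by
  have htb := hta.trans hab
  unfold picard
  rw [add_sub_add_left_eq_sub, intervalIntegral.integral_interval_sub_left]
  · exact (hint.mono_set (uIcc_subset_Icc ⟨le_rfl, htb⟩ ⟨htb, le_rfl⟩)).intervalIntegrable
  · exact (hint.mono_set (uIcc_subset_Icc ⟨le_rfl, htb⟩ ⟨hta, hab⟩)).intervalIntegrable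

namespace DelayBounds

variable {n : ℕ} {f : ℝ → (ℝ → (Fin n → ℝ)) → (Fin n → ℝ)} {φ w w1 w2 : ℝ → (Fin n → ℝ)}
  {θ t0 Tb R L C a b δ : ℝ}

theorem radius_nonneg (h : DelayBounds f φ θ t0 Tb R L C) : 0 ≤ R :=
  (norm_nonneg _).trans (h.norm_initial_le 0)

theorem ae_norm_integrand_le (h : DelayBounds f φ θ t0 Tb R L C) (hb : b ≤ Tb)
    (hw : ∀ r ∈ Icc t0 b, ‖w r‖ ≤ R) :
    ∀ᵐ s, s ∈ Icc t0 b → ‖f s (seg17 n t0 φ w s)‖ ≤ C + L * R := by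
  filter_upwards [h.ae_lipschitz_bounded] with s hs hsb
  obtain ⟨hlip, hC⟩ := hs ⟨hsb.1, hsb.2.trans hb⟩
  have hseg : ∀ u ∈ Icc (-θ) 0, ‖seg17 n t0 φ w s u‖ ≤ R := fun u hu =>
    norm_seg17_le h.norm_initial_le (fun r hr => hw r (Icc_subset_Icc_right hsb.2 hr)) hu.2
  linarith [hlip.norm_le h.const_nonneg h.radius_nonneg hseg]

theorem ae_norm_integrand_sub_le (h : DelayBounds f φ θ t0 Tb R L C) (hb : b ≤ Tb)
    (hδ : 0 ≤ δ) (hw1 : ∀ r ∈ Icc t0 b, ‖w1 r‖ ≤ R) (hw2 : ∀ r ∈ Icc t0 b, ‖w2 r‖ ≤ R)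
    (hw : ∀ r ∈ Icc t0 b, ‖w1 r - w2 r‖ ≤ δ) :
    ∀ᵐ s, s ∈ Icc t0 b →
      ‖f s (seg17 n t0 φ w1 s) - f s (seg17 n t0 φ w2 s)‖ ≤ L * δ := by
  filter_upwards [h.ae_lipschitz_bounded] with s hs hsb
  have hsub : Icc t0 s ⊆ Icc t0 b := Icc_subset_Icc_right hsb.2
  exact (hs ⟨hsb.1, hsb.2.trans hb⟩).1.norm_sub_le h.const_nonneg hδ
    (fun u hu => norm_seg17_le h.norm_initial_le (fun r hr => hw1 r (hsub hr)) hu.2)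
    (fun u hu => norm_seg17_le h.norm_initial_le (fun r hr => hw2 r (hsub hr)) hu.2)
    (fun u hu => norm_seg17_sub_le hδ (fun r hr => hw r (hsub hr)) hu.2)

theorem integrableOn_integrand (h : DelayBounds f φ θ t0 Tb R L C)
    (hmeas : IntegrandAEMeasurable f φ t0) (hb : b ≤ Tb) (hwc : ContinuousOn w (Icc t0 b))
    (hw : ∀ r ∈ Icc t0 b, ‖w r‖ ≤ R) :
    IntegrableOn (fun s => f s (seg17 n t0 φ w s)) (Icc t0 b) := by
  rcases le_or_gt b t0 with hbt | hbt
  · exact IntegrableOn.of_measure_zero (by simp [Real.volume_Icc, hbt])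
  refine Integrable.mono' (integrableOn_const (C := C + L * R) measure_Icc_lt_top.ne)
    (hmeas b hbt w hwc).aestronglyMeasurable ?_
  exact (ae_restrict_iff' measurableSet_Icc).2 (h.ae_norm_integrand_le hb hw)

theorem picard_congr (h : DelayBounds f φ θ t0 Tb R L C) (hb : b ≤ Tb) (htb : t0 ≤ b)
    (hw1 : ∀ r ∈ Icc t0 b, ‖w1 r‖ ≤ R) (hw2 : ∀ r ∈ Icc t0 b, ‖w2 r‖ ≤ R)
    (hw : EqOn w1 w2 (Icc t0 b)) :
    picard f t0 φ w1 b = picard f t0 φ w2 b := by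
  unfold picard
  congr 1
  refine intervalIntegral.integral_congr_ae ?_
  filter_upwards [h.ae_norm_integrand_sub_le hb le_rfl hw1 hw2
    (fun r hr => by simp [hw hr])] with s hs hsb
  rw [uIoc_of_le htb] at hsb
  simpa [sub_eq_zero] using hs (Ioc_subset_Icc_self hsb)

theorem continuousOn_picard (h : DelayBounds f φ θ t0 Tb R L C)
    (hmeas : IntegrandAEMeasurable f φ t0) (htb : t0 ≤ b) (hb : b ≤ Tb)
    (hwc : ContinuousOn w (Icc t0 b)) (hw : ∀ r ∈ Icc t0 b, ‖w r‖ ≤ R) :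
    ContinuousOn (picard f t0 φ w) (Icc t0 b) := by
  have hint := h.integrableOn_integrand hmeas hb hwc hw
  rw [← uIcc_of_le htb] at hint ⊢
  exact continuousOn_const.add (intervalIntegral.continuousOn_primitive_interval hint)

theorem norm_picard_sub_le (h : DelayBounds f φ θ t0 Tb R L C)
    (hmeas : IntegrandAEMeasurable f φ t0) (hta : t0 ≤ a) (hab : a ≤ b) (hb : b ≤ Tb)
    (hwc : ContinuousOn w (Icc t0 b)) (hw : ∀ r ∈ Icc t0 b, ‖w r‖ ≤ R) :
    ‖picard f t0 φ w b - picard f t0 φ w a‖ ≤ (C + L * R) * (b - a) := by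
  rw [picard_sub_picard (h.integrableOn_integrand hmeas hb hwc hw) hta hab,
    ← abs_of_nonneg (sub_nonneg.2 hab)]
  refine intervalIntegral.norm_integral_le_of_norm_le_const_ae ?_
  filter_upwards [h.ae_norm_integrand_le hb hw] with s hs hsab
  rw [uIoc_of_le hab] at hsab
  exact hs ⟨hta.trans hsab.1.le, hsab.2⟩

theorem norm_picard_sub_picard_le (h : DelayBounds f φ θ t0 Tb R L C)
    (hmeas : IntegrandAEMeasurable f φ t0) (hta : t0 ≤ a) (hab : a ≤ b) (hb : b ≤ Tb)
    (hδ : 0 ≤ δ) (hwc1 : ContinuousOn w1 (Icc t0 b)) (hwc2 : ContinuousOn w2 (Icc t0 b))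
    (hw1 : ∀ r ∈ Icc t0 b, ‖w1 r‖ ≤ R) (hw2 : ∀ r ∈ Icc t0 b, ‖w2 r‖ ≤ R)
    (heq : EqOn w1 w2 (Icc t0 a)) (hw : ∀ r ∈ Icc t0 b, ‖w1 r - w2 r‖ ≤ δ) :
    ‖picard f t0 φ w1 b - picard f t0 φ w2 b‖ ≤ L * δ * (b - a) := by
  have hsub : Icc t0 a ⊆ Icc t0 b := Icc_subset_Icc_right hab
  have ha : picard f t0 φ w1 a = picard f t0 φ w2 a :=
    h.picard_congr (hab.trans hb) hta (fun r hr => hw1 r (hsub hr))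
      (fun r hr => hw2 r (hsub hr)) heq
  have hint1 := h.integrableOn_integrand hmeas hb hwc1 hw1
  have hint2 := h.integrableOn_integrand hmeas hb hwc2 hw2
  have hab' : uIcc a b ⊆ Icc t0 b := uIcc_subset_Icc ⟨hta, hab⟩ ⟨hta.trans hab, le_rfl⟩
  have hdiff : picard f t0 φ w1 b - picard f t0 φ w2 b =
      ∫ s in a..b, (f s (seg17 n t0 φ w1 s) - f s (seg17 n t0 φ w2 s)) := by
    rw [intervalIntegral.integral_sub (hint1.mono_set hab').intervalIntegrable
      (hint2.mono_set hab').intervalIntegrable, ← picard_sub_picard hint1 hta hab,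
      ← picard_sub_picard hint2 hta hab, ha]
    abel
  rw [hdiff, ← abs_of_nonneg (sub_nonneg.2 hab)]
  refine intervalIntegral.norm_integral_le_of_norm_le_const_ae ?_
  filter_upwards [h.ae_norm_integrand_sub_le hb hδ hw1 hw2 hw] with s hs hsab
  rw [uIoc_of_le hab] at hsab
  exact hs ⟨hta.trans hsab.1.le, hsab.2⟩

theorem lipschitzOnWith_of_eqOn_picard {x : ℝ → (Fin n → ℝ)} {T : ℝ}
    (h : DelayBounds f φ θ t0 Tb R L C) (hmeas : IntegrandAEMeasurable f φ t0) (hT : T ≤ Tb)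
    (hxc : ContinuousOn x (Ico t0 T)) (hxR : ∀ t ∈ Ico t0 T, ‖x t‖ ≤ R)
    (hx : EqOn x (picard f t0 φ x) (Ico t0 T)) :
    LipschitzOnWith (C + L * R).toNNReal x (Ico t0 T) := by
  have key : ∀ a ∈ Ico t0 T, ∀ b ∈ Ico t0 T, a ≤ b →
      dist (x a) (x b) ≤ (C + L * R).toNNReal * dist a b := by
    intro a ha b hb hab
    have hsub : Icc t0 b ⊆ Ico t0 T := Icc_subset_Ico_right hb.2
    calc dist (x a) (x b) = ‖picard f t0 φ x b - picard f t0 φ x a‖ := by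
          rw [dist_comm, dist_eq_norm, ← hx hb, ← hx ha]
      _ ≤ (C + L * R) * (b - a) :=
          h.norm_picard_sub_le hmeas ha.1 hab (hb.2.le.trans hT) (hxc.mono hsub)
            (fun r hr => hxR r (hsub hr))
      _ ≤ (C + L * R).toNNReal * dist a b := by
          rw [dist_comm, Real.dist_eq, abs_of_nonneg (sub_nonneg.2 hab)]
          exact mul_le_mul_of_nonneg_right (Real.le_coe_toNNReal _) (sub_nonneg.2 hab)
  refine LipschitzOnWith.of_dist_le_mul fun a ha b hb => ?_
  rcases le_total a b with hab | hba
  · exact key a ha b hb hab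
  · rw [dist_comm, dist_comm a]
    exact key b hb a ha hba

theorem eqOn_picard_Icc_of_eqOn_Ico {x y : ℝ → (Fin n → ℝ)} {T : ℝ}
    (h : DelayBounds f φ θ t0 Tb R L C) (hmeas : IntegrandAEMeasurable f φ t0) (ht0T : t0 < T)
    (hT : T ≤ Tb) (hyc : ContinuousOn y (Icc t0 T)) (hyR : ∀ t ∈ Icc t0 T, ‖y t‖ ≤ R)
    (hyx : EqOn y x (Ico t0 T)) (hx : EqOn x (picard f t0 φ x) (Ico t0 T)) :
    EqOn y (picard f t0 φ y) (Icc t0 T) := by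
  refine EqOn.of_subset_closure (fun t ht => ?_) hyc
    (h.continuousOn_picard hmeas ht0T.le hT hyc hyR) Ico_subset_Icc_self (closure_Ico ht0T.ne).ge
  have hsub : Icc t0 t ⊆ Ico t0 T := Icc_subset_Ico_right ht.2
  rw [hyx ht, hx ht]
  refine h.picard_congr (ht.2.le.trans hT) ht.1 (fun r hr => ?_)
    (fun r hr => hyR r (Ico_subset_Icc_self (hsub hr))) (fun r hr => (hyx (hsub hr)).symm)
  rw [← hyx (hsub hr)]
  exact hyR r (Ico_subset_Icc_self (hsub hr))

theorem exists_continuous_eqOn_picard_Icc {x : ℝ → (Fin n → ℝ)} {T Cx : ℝ}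
    (h : DelayBounds f φ θ t0 Tb R L C) (hmeas : IntegrandAEMeasurable f φ t0) (ht0T : t0 < T)
    (hT : T ≤ Tb) (hCx : Cx ≤ R) (hxc : ContinuousOn x (Ico t0 T))
    (hxR : ∀ t ∈ Ico t0 T, ‖x t‖ ≤ Cx) (hx : EqOn x (picard f t0 φ x) (Ico t0 T)) :
    ∃ y, Continuous y ∧ EqOn y x (Ico t0 T) ∧ (∀ t ∈ Icc t0 T, ‖y t‖ ≤ Cx) ∧
      EqOn y (picard f t0 φ y) (Icc t0 T) := by
  obtain ⟨y, hylip, hxy⟩ := (h.lipschitzOnWith_of_eqOn_picard hmeas hT hxc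
    (fun t ht => (hxR t ht).trans hCx) hx).extend_pi
  have hyR : ∀ t ∈ Icc t0 T, ‖y t‖ ≤ Cx := by
    rw [← closure_Ico ht0T.ne]
    refine le_on_closure (fun t ht => ?_) hylip.continuous.norm.continuousOn continuousOn_const
    rw [← hxy ht]
    exact hxR t ht
  refine ⟨y, hylip.continuous, hxy.symm, hyR, ?_⟩
  exact h.eqOn_picard_Icc_of_eqOn_Ico hmeas ht0T hT hylip.continuous.continuousOn
    (fun t ht => (hyR t ht).trans hCx) hxy.symm hx
theorem eqOn_picard_and_norm_picard_le {x : ℝ → (Fin n → ℝ)} {T T' : ℝ}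
    (h : DelayBounds f φ θ t0 Tb R L C) (hmeas : IntegrandAEMeasurable f φ t0) (hC : 0 ≤ C)
    (ht0T : t0 ≤ T) (hTT' : T ≤ T') (hT' : T' ≤ Tb)
    (hM : (C + L * R) * (T' - T) ≤ 1) (hxR : ∀ t ∈ Icc t0 T, ‖x t‖ ≤ R - 1)
    (hx : EqOn x (picard f t0 φ x) (Icc t0 T))
    (hwc : ContinuousOn w (Icc t0 T')) (hwR : ∀ r ∈ Icc t0 T', ‖w r‖ ≤ R)
    (hwx : EqOn w x (Icc t0 T)) :
    EqOn (picard f t0 φ w) x (Icc t0 T) ∧ ∀ t ∈ Icc t0 T', ‖picard f t0 φ w t‖ ≤ R := by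
  have hsub : Icc t0 T ⊆ Icc t0 T' := Icc_subset_Icc_right hTT'
  have heq : EqOn (picard f t0 φ w) x (Icc t0 T) := fun t ht => by
    have hsub' : Icc t0 t ⊆ Icc t0 T := Icc_subset_Icc_right ht.2
    rw [hx ht]
    exact h.picard_congr (ht.2.trans (hTT'.trans hT')) ht.1
      (fun r hr => hwR r (hsub (hsub' hr))) (fun r hr => by linarith [hxR r (hsub' hr)])
      (fun r hr => hwx (hsub' hr))
  refine ⟨heq, fun t ht => ?_⟩
  rcases le_total t T with htT | hTt
  · rw [heq ⟨ht.1, htT⟩]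
    linarith [hxR t ⟨ht.1, htT⟩]
  have hincr := h.norm_picard_sub_le hmeas ht0T hTt (ht.2.trans hT')
    (hwc.mono (Icc_subset_Icc_right ht.2)) (fun r hr => hwR r (Icc_subset_Icc_right ht.2 hr))
  have hM' : (C + L * R) * (t - T) ≤ 1 :=
    (mul_le_mul_of_nonneg_left (by linarith [ht.2])
      (add_nonneg hC (mul_nonneg h.const_nonneg h.radius_nonneg))).trans hM
  have hT : ‖picard f t0 φ w T‖ ≤ R - 1 := by
    rw [heq ⟨ht0T, le_rfl⟩]
    exact hxR T ⟨ht0T, le_rfl⟩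
  calc ‖picard f t0 φ w t‖
      ≤ ‖picard f t0 φ w T‖ + ‖picard f t0 φ w t - picard f t0 φ w T‖ := norm_le_insert' _ _
    _ ≤ R := by linarith

theorem norm_picard_sub_picard_le_of_eqOn {T T' t : ℝ} (h : DelayBounds f φ θ t0 Tb R L C)
    (hmeas : IntegrandAEMeasurable f φ t0) (ht0T : t0 ≤ T) (hTT' : T ≤ T') (hT' : T' ≤ Tb)
    (hδ : 0 ≤ δ) (hwc1 : ContinuousOn w1 (Icc t0 T')) (hwc2 : ContinuousOn w2 (Icc t0 T'))
    (hw1 : ∀ r ∈ Icc t0 T', ‖w1 r‖ ≤ R) (hw2 : ∀ r ∈ Icc t0 T', ‖w2 r‖ ≤ R)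
    (heq : EqOn w1 w2 (Icc t0 T)) (hw : ∀ r ∈ Icc t0 T', ‖w1 r - w2 r‖ ≤ δ)
    (ht : t ∈ Icc t0 T') :
    ‖picard f t0 φ w1 t - picard f t0 φ w2 t‖ ≤ L * (T' - T) * δ := by
  have hsub : Icc t0 t ⊆ Icc t0 T' := Icc_subset_Icc_right ht.2
  have hgap : t - min T t ≤ T' - T := by
    rcases min_choice T t with hmin | hmin <;> rw [hmin] <;> linarith [ht.2]
  calc ‖picard f t0 φ w1 t - picard f t0 φ w2 t‖ ≤ L * δ * (t - min T t) :=
        h.norm_picard_sub_picard_le hmeas (le_min ht0T ht.1) (min_le_right _ _) (ht.2.trans hT')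
          hδ (hwc1.mono hsub) (hwc2.mono hsub) (fun r hr => hw1 r (hsub hr))
          (fun r hr => hw2 r (hsub hr)) (heq.mono (Icc_subset_Icc_right (min_le_left _ _)))
          (fun r hr => hw r (hsub hr))
    _ ≤ L * δ * (T' - T) := mul_le_mul_of_nonneg_left hgap (mul_nonneg h.const_nonneg hδ)
    _ = L * (T' - T) * δ := by ring

theorem exists_continuousMap_eq_picard {x : ℝ → (Fin n → ℝ)} {T T' : ℝ}
    (h : DelayBounds f φ θ t0 Tb R L C) (hmeas : IntegrandAEMeasurable f φ t0) (hC : 0 ≤ C)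
    (ht0T : t0 ≤ T) (hTT' : T ≤ T') (hT' : T' ≤ Tb)
    (hM : (C + L * R) * (T' - T) ≤ 1) (hxR : ∀ t ∈ Icc t0 T, ‖x t‖ ≤ R - 1)
    (hx : EqOn x (picard f t0 φ x) (Icc t0 T))
    (hwc : ContinuousOn w (Icc t0 T')) (hwR : ∀ r ∈ Icc t0 T', ‖w r‖ ≤ R)
    (hwx : EqOn w x (Icc t0 T)) :
    ∃ z : C(Icc t0 T', Fin n → ℝ), (EqOn (IccExtend (ht0T.trans hTT') z) x (Icc t0 T) ∧
      ‖z‖ ≤ R) ∧ ∀ p, z p = picard f t0 φ w p := by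
  obtain ⟨heq, hPR⟩ :=
    h.eqOn_picard_and_norm_picard_le hmeas hC ht0T hTT' hT' hM hxR hx hwc hwR hwx
  refine ⟨⟨_, (h.continuousOn_picard hmeas (ht0T.trans hTT') hT' hwc hwR).domRestrict⟩,
    ⟨fun t ht => ?_, (ContinuousMap.norm_le _ h.radius_nonneg).2 fun p => hPR p p.2⟩,
    fun p => rfl⟩
  rw [IccExtend_of_mem _ _ ⟨ht.1, ht.2.trans hTT'⟩]
  exact heq ht

theorem exists_eqOn_picard_extension {x : ℝ → (Fin n → ℝ)} {T T' : ℝ}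
    (h : DelayBounds f φ θ t0 Tb R L C) (hmeas : IntegrandAEMeasurable f φ t0) (hC : 0 ≤ C)
    (ht0T : t0 ≤ T) (hTT' : T ≤ T') (hT' : T' ≤ Tb)
    (hM : (C + L * R) * (T' - T) ≤ 1) (hLT : L * (T' - T) ≤ 1 / 2)
    (hxc : ContinuousOn x (Icc t0 T)) (hxR : ∀ t ∈ Icc t0 T, ‖x t‖ ≤ R - 1)
    (hx : EqOn x (picard f t0 φ x) (Icc t0 T)) :
    ∃ y, ContinuousOn y (Icc t0 T') ∧ EqOn y x (Icc t0 T) ∧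
      EqOn y (picard f t0 φ y) (Icc t0 T') := by
  have ht0T' : t0 ≤ T' := ht0T.trans hTT'
  let extend : C(Icc t0 T', Fin n → ℝ) → ℝ → (Fin n → ℝ) := fun z => IccExtend ht0T' z
  have hextend : ∀ z, Continuous (extend z) := fun z => continuous_IccExtend_iff.2 z.continuous
  have hextend_of_mem : ∀ z t (ht : t ∈ Icc t0 T'), extend z t = z ⟨t, ht⟩ := fun z _ ht =>
    IccExtend_of_mem _ _ ht
  have hextendR : ∀ z, ‖z‖ ≤ R → ∀ t, ‖extend z t‖ ≤ R := fun z hz t =>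
    (z.norm_coe_le_norm _).trans hz
  let S : Set C(Icc t0 T', Fin n → ℝ) :=
    {z | EqOn (extend z) x (Icc t0 T)} ∩ {z | ‖z‖ ≤ R}
  have hSclosed : IsClosed S := (isClosed_setOf_eqOn_IccExtend ht0T' x _).inter
    (isClosed_le continuous_norm continuous_const)
  have hstep : ∀ z ∈ S, ∃ z' ∈ S, ∀ p : Icc t0 T', z' p = picard f t0 φ (extend z) p := fun z hz =>
    h.exists_continuousMap_eq_picard hmeas hC ht0T hTT' hT' hM hxR hx (hextend z).continuousOn
      (fun r _ => hextendR z hz.2 r) hz.1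
  choose! Φ hΦS hΦ using hstep
  have hcontr : ∀ z1 ∈ S, ∀ z2 ∈ S, dist (Φ z1) (Φ z2) ≤ 2⁻¹ * dist z1 z2 := by
    intro z1 hz1 z2 hz2
    refine (ContinuousMap.dist_le (by positivity)).2 fun p => ?_
    rw [hΦ z1 hz1, hΦ z2 hz2, dist_eq_norm]
    refine (h.norm_picard_sub_picard_le_of_eqOn hmeas ht0T hTT' hT'
      (dist_nonneg (x := z1) (y := z2)) (hextend z1).continuousOn (hextend z2).continuousOn
      (fun r _ => hextendR z1 hz1.2 r) (fun r _ => hextendR z2 hz2.2 r)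
      (fun r hr => (hz1.1 hr).trans (hz2.1 hr).symm) (fun r _ => ?_) p.2).trans ?_
    · rw [← dist_eq_norm]
      exact ContinuousMap.dist_apply_le_dist _
    · exact mul_le_mul_of_nonneg_right (by linarith) dist_nonneg
  have hmaps : MapsTo Φ S S := hΦS
  have hΦc : ContractingWith 2⁻¹ (hmaps.restrict Φ S S) :=
    ⟨by norm_num, LipschitzWith.of_dist_le_mul fun z1 z2 => by
      push_cast
      exact hcontr z1 z1.2 z2 z2.2⟩
  let z0 : C(Icc t0 T', Fin n → ℝ) :=
    ⟨fun p => x (min p T), hxc.comp_continuous (continuous_subtype_val.min continuous_const)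
      fun p => ⟨le_min p.2.1 ht0T, min_le_right _ _⟩⟩
  have hz0 : z0 ∈ S := by
    refine ⟨fun t ht => ?_, (ContinuousMap.norm_le _ h.radius_nonneg).2 fun p => ?_⟩
    · rw [hextend_of_mem _ _ ⟨ht.1, ht.2.trans hTT'⟩]
      simp [z0, ht.2]
    · show ‖x (min (p : ℝ) T)‖ ≤ R
      linarith [hxR _ ⟨le_min p.2.1 ht0T, min_le_right (p : ℝ) T⟩]
  obtain ⟨z, hzS, hzfix, -⟩ :=
    hΦc.exists_fixedPoint' hSclosed.isComplete hmaps hz0 (edist_ne_top _ _)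
  refine ⟨extend z, (hextend z).continuousOn, hzS.1, fun t ht => ?_⟩
  rw [hextend_of_mem _ _ ht]
  exact (congrArg (· ⟨t, ht⟩) hzfix).symm.trans (hΦ z hzS ⟨t, ht⟩)

theorem exists_isSolOn17_extension {x : ℝ → (Fin n → ℝ)} {T : ℝ}
    (h : DelayBounds f φ θ t0 Tb R L C) (hmeas : IntegrandAEMeasurable f φ t0) (hC : 0 ≤ C)
    (hT : 0 < T) (hTb : T < Tb) (hxR : ∀ t ∈ Ico t0 T, ‖x t‖ ≤ R - 1)
    (hx : IsSolOn17 n f t0 φ x (ENNReal.ofReal T)) :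
    ∃ T' > T, ∃ y, IsSolOn17 n f t0 φ y (ENNReal.ofReal T') ∧ EqOn y x (Ico t0 T) := by
  obtain ⟨ht0T, hxc, hxsol⟩ := (isSolOn17_ofReal_iff hT).1 hx
  obtain ⟨x', hx'c, hx'x, hx'R, hx'sol⟩ :=
    h.exists_continuous_eqOn_picard_Icc hmeas ht0T hTb.le (by linarith) hxc hxR hxsol
  set M := C + L * R
  have hM : 0 ≤ M := add_nonneg hC (mul_nonneg h.const_nonneg h.radius_nonneg)
  have hpos : 0 < 2 * (M + L + 1) := by linarith [h.const_nonneg]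
  set ε := min (Tb - T) (2 * (M + L + 1))⁻¹
  have hε : 0 < ε := lt_min (by linarith) (inv_pos.2 hpos)
  have hsmall : ∀ c, 0 ≤ c → c ≤ M + L → c * ε ≤ 1 / 2 := fun c hc hcML => calc
    c * ε ≤ c * (2 * (M + L + 1))⁻¹ := mul_le_mul_of_nonneg_left (min_le_right _ _) hc
    _ ≤ 1 / 2 := by
      rw [← div_eq_mul_inv, div_le_iff₀ hpos]
      linarith
  obtain ⟨y, hyc, hyx', hysol⟩ := h.exists_eqOn_picard_extension (T' := T + ε) hmeas hC
    ht0T.le (by linarith) (by linarith [min_le_left (Tb - T) (2 * (M + L + 1))⁻¹])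
    (by linarith [hsmall M hM (by linarith [h.const_nonneg])])
    (by simpa using hsmall L h.const_nonneg (by linarith)) hx'c.continuousOn hx'R hx'sol
  refine ⟨T + ε, by linarith, y, (isSolOn17_ofReal_iff (by linarith)).2
    ⟨by linarith, hyc.mono Ico_subset_Icc_self, hysol.mono Ico_subset_Icc_self⟩,
    fun t ht => (hyx' (Ico_subset_Icc_self ht)).trans (hx'x ht)⟩

end DelayBounds

theorem stmt_17_general (n : ℕ) (θ : ℝ)
    (f : ℝ → (ℝ → (Fin n → ℝ)) → (Fin n → ℝ))
    (hLip : ∀ R > (0 : ℝ), ∀ T > (0 : ℝ), ∃ L ≥ (0 : ℝ),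
      ∀ᵐ t ∂(volume.restrict (Set.Icc 0 T)), ∀ ψ1 ψ2 : ℝ → (Fin n → ℝ),
        (∀ u ∈ Set.Icc (-θ) 0, ‖ψ1 u‖ ≤ R) → (∀ u ∈ Set.Icc (-θ) 0, ‖ψ2 u‖ ≤ R) →
        ‖f t ψ1 - f t ψ2‖ ≤ L * sSup ((fun u => ‖ψ1 u - ψ2 u‖) '' Set.Icc (-θ) 0))
    (hf0 : ∀ T > (0 : ℝ), ∃ C : ℝ, ∀ᵐ t ∂(volume.restrict (Set.Icc 0 T)), ‖f t 0‖ ≤ C)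
    (hfmeas : ∀ t0 ≥ (0 : ℝ), ∀ T > t0, ∀ φ : ℝ → (Fin n → ℝ), Measurable φ →
      (∃ C : ℝ, ∀ u, ‖φ u‖ ≤ C) → ∀ x : ℝ → (Fin n → ℝ), ContinuousOn x (Set.Icc t0 T) →
      AEMeasurable (fun t => f t (seg17 n t0 φ x t)) (volume.restrict (Set.Icc t0 T)))
    (t0 : ℝ) (ht0 : 0 ≤ t0) (φ : ℝ → (Fin n → ℝ)) (hφm : Measurable φ)
    (hφb : ∃ C : ℝ, ∀ u, ‖φ u‖ ≤ C)
    (x : ℝ → (Fin n → ℝ)) (Tx : ℝ≥0∞)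
    (hx : IsMaxSolOn17 n f t0 φ x Tx)
    (hbdd : ∃ C : ℝ, ∀ t, t0 ≤ t → ENNReal.ofReal t < Tx → ‖x t‖ ≤ C) :
    Tx = ⊤ := by
  obtain ⟨hsol, hmax⟩ := hx
  by_contra hTx
  obtain ⟨T, rfl⟩ : ∃ T, Tx = ENNReal.ofReal T := ⟨Tx.toReal, (ENNReal.ofReal_toReal hTx).symm⟩
  have hT : 0 < T := ENNReal.ofReal_pos.1 (pos_of_gt hsol.1)
  obtain ⟨Cx, hCx⟩ := hbdd
  obtain ⟨Cφ, hCφ⟩ := hφb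
  have hR : 0 < max Cx Cφ + 1 := by linarith [le_max_right Cx Cφ, (norm_nonneg _).trans (hCφ 0)]
  obtain ⟨L, hL, hLae⟩ := hLip _ hR (T + 1) (by linarith)
  obtain ⟨C, hC⟩ := hf0 (T + 1) (by linarith)
  have h : DelayBounds f φ θ t0 (T + 1) (max Cx Cφ + 1) L |C| := by
    refine ⟨hL, fun v => by linarith [hCφ v, le_max_right Cx Cφ], ?_⟩
    filter_upwards [(ae_restrict_iff' measurableSet_Icc).1 (hLae.and hC)] with s hs hsI
    exact (hs ⟨ht0.trans hsI.1, hsI.2⟩).imp_right (·.trans (le_abs_self C))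
  obtain ⟨T', hTT', y, hy, hyx⟩ := h.exists_isSolOn17_extension
    (fun b hb w hw => hfmeas t0 ht0 b hb φ hφm ⟨Cφ, hCφ⟩ w hw) (abs_nonneg C) hT (by linarith)
    (fun t ht => by
      linarith [hCx t ht.1 ((ENNReal.ofReal_lt_ofReal_iff hT).2 ht.2), le_max_left Cx Cφ]) hsol
  have hT'T := hmax y _ hy fun t ht htT => hyx ⟨ht, (ENNReal.ofReal_lt_ofReal_iff hT).1 htT⟩
  exact (ENNReal.ofReal_le_ofReal_iff hT.le).1 hT'T |>.not_gt hTT'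

/-- A bounded maximally defined solution exists for all future times: if
`sup_{t0 ≤ t < Tx} |x(t)| < ∞` then `Tx = ∞`. -/
theorem stmt_17 (n : ℕ) (θ : ℝ) (hθ : 0 < θ)
    (f : ℝ → (ℝ → (Fin n → ℝ)) → (Fin n → ℝ))
    (hLip : ∀ R > (0 : ℝ), ∀ T > (0 : ℝ), ∃ L ≥ (0 : ℝ),
      ∀ᵐ t ∂(volume.restrict (Set.Icc 0 T)), ∀ ψ1 ψ2 : ℝ → (Fin n → ℝ),
        (∀ u ∈ Set.Icc (-θ) 0, ‖ψ1 u‖ ≤ R) → (∀ u ∈ Set.Icc (-θ) 0, ‖ψ2 u‖ ≤ R) →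
        ‖f t ψ1 - f t ψ2‖ ≤ L * sSup ((fun u => ‖ψ1 u - ψ2 u‖) '' Set.Icc (-θ) 0))
    (hf0 : ∀ T > (0 : ℝ), ∃ C : ℝ, ∀ᵐ t ∂(volume.restrict (Set.Icc 0 T)), ‖f t 0‖ ≤ C)
    (hfmeas : ∀ t0 ≥ (0 : ℝ), ∀ T > t0, ∀ φ : ℝ → (Fin n → ℝ), Measurable φ →
      (∃ C : ℝ, ∀ u, ‖φ u‖ ≤ C) → ∀ x : ℝ → (Fin n → ℝ), ContinuousOn x (Set.Icc t0 T) →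
      AEMeasurable (fun t => f t (seg17 n t0 φ x t)) (volume.restrict (Set.Icc t0 T)))
    (t0 : ℝ) (ht0 : 0 ≤ t0) (φ : ℝ → (Fin n → ℝ)) (hφm : Measurable φ)
    (hφb : ∃ C : ℝ, ∀ u, ‖φ u‖ ≤ C)
    (x : ℝ → (Fin n → ℝ)) (Tx : ℝ≥0∞)
    (hx : IsMaxSolOn17 n f t0 φ x Tx)
    (hbdd : ∃ C : ℝ, ∀ t, t0 ≤ t → ENNReal.ofReal t < Tx → ‖x t‖ ≤ C) :
    Tx = ⊤ :=
  stmt_17_general n θ f hLip hf0 hfmeas t0 ht0 φ hφm hφb x Tx hx hbdd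
end
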